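/- arXiv:2309.11950 — 11 statements merged into one kernel-verified Lean document; each statement's English description precedes it below -/
import Mathlib

section
/- Let π denote the row vector (π₀₀, π₀₁, π₁₀, π₁₁) and let M be the 4×4 matrix indexed by the states {(0,0),(0,1),(1,0),(1,1)} with entries M[(0,0),(0,0)] = 1−p, M[(0,0),(1,0)] = p(1−a₁s₁), M[(0,0),(1,1)] = p·a₁·s₁, M[(0,1),(0,0)] = (1−p)·a₀·s₀, M[(0,1),(0,1)] = (1−p)(1−a₀s₀), M[(0,1),(1,1)] = p, M[(1,0),(0,0)] = q, M[(1,0),(1,0)] = (1−q)(1−a₁s₁), M[(1,0),(1,1)] = (1−q)·a₁·s₁, M[(1,1),(0,0)] = q·a₀·s₀, M[(1,1),(0,1)] = q(1−a₀s₀), M[(1,1),(1,1)] = 1−q, and all other entries equal to 0. Then each entry of π is nonnegative, π₀₀ + π₀₁ + π₁₀ + π₁₁ = 1, and π·M = π, i.e., π is a stationary distribution of M. -/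
/-- The vector `π = (π₀₀, π₀₁, π₁₀, π₁₁)` given in Lemma 1 is a stationary distribution
of the two-dimensional joint source–reconstruction DTMC of the state-aware randomized
stationary policy. -/
theorem state_aware_stationary_distribution
    (p q a₀ a₁ s₀ s₁ Φ : ℝ)
    (hp : 0 < p) (hp1 : p < 1) (hq : 0 < q) (hq1 : q < 1)
    (ha₀ : 0 ≤ a₀) (ha₀1 : a₀ ≤ 1) (ha₁ : 0 ≤ a₁) (ha₁1 : a₁ ≤ 1)
    (hs₀ : 0 ≤ s₀) (hs₀1 : s₀ ≤ 1) (hs₁ : 0 ≤ s₁) (hs₁1 : s₁ ≤ 1)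
    (hΦdef : Φ = p * a₁ * s₁ * (1 - a₀ * s₀) + a₀ * s₀ * (q + (1 - q) * a₁ * s₁))
    (hΦ : 0 < Φ)
    (π : Fin 4 → ℝ)
    (hπ : π = ![q * a₀ * s₀ * (q + (1 - q) * a₁ * s₁) / ((p + q) * Φ),
                p * q * a₁ * s₁ * (1 - a₀ * s₀) / ((p + q) * Φ),
                p * q * a₀ * s₀ * (1 - a₁ * s₁) / ((p + q) * Φ),
                p * a₁ * s₁ * (p + (1 - p) * a₀ * s₀) / ((p + q) * Φ)])
    (M : Matrix (Fin 4) (Fin 4) ℝ)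
    (hM : M = !![1 - p,              0,                      p * (1 - a₁ * s₁),       p * a₁ * s₁;
                 (1 - p) * a₀ * s₀,  (1 - p) * (1 - a₀ * s₀), 0,                      p;
                 q,                  0,                      (1 - q) * (1 - a₁ * s₁), (1 - q) * a₁ * s₁;
                 q * a₀ * s₀,        q * (1 - a₀ * s₀),      0,                       1 - q]) :
    (∀ i, 0 ≤ π i) ∧ (∑ i, π i = 1) ∧ Matrix.vecMul π M = π := by
  have hx0 : 0 ≤ a₀ * s₀ := mul_nonneg ha₀ hs₀
  have hx1 : a₀ * s₀ ≤ 1 := mul_le_one₀ ha₀1 hs₀ hs₀1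
  have hy0 : 0 ≤ a₁ * s₁ := mul_nonneg ha₁ hs₁
  have hy1 : a₁ * s₁ ≤ 1 := mul_le_one₀ ha₁1 hs₁ hs₁1
  have hpq : 0 < p + q := by linarith
  have hden : 0 < (p + q) * Φ := mul_pos hpq hΦ
  have hdne : (p + q) * Φ ≠ 0 := ne_of_gt hden
  subst hπ hM
  refine ⟨?_, ?_, ?_⟩
  · intro i
    fin_cases i <;> simp <;>
      apply div_nonneg _ (le_of_lt hden)
    · have h1 : 0 ≤ (1 - q) * a₁ * s₁ := by
        apply mul_nonneg (mul_nonneg (by linarith) ha₁) hs₁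
      exact mul_nonneg (mul_nonneg (mul_nonneg hq.le ha₀) hs₀) (by linarith)
    · exact mul_nonneg (mul_nonneg (mul_nonneg (mul_nonneg hp.le hq.le) ha₁) hs₁)
        (by linarith)
    · exact mul_nonneg (mul_nonneg (mul_nonneg (mul_nonneg hp.le hq.le) ha₀) hs₀)
        (by linarith)
    · have h1 : 0 ≤ (1 - p) * a₀ * s₀ := by
        apply mul_nonneg (mul_nonneg (by linarith) ha₀) hs₀
      exact mul_nonneg (mul_nonneg (mul_nonneg hp.le ha₁) hs₁) (by linarith)
  · rw [Fin.sum_univ_four]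
    simp only [Matrix.cons_val_zero, Matrix.cons_val_one, Matrix.head_cons,
      Matrix.cons_val_two, Matrix.tail_cons, Matrix.cons_val_three]
    field_simp
    rw [hΦdef]; ring
  · funext j
    fin_cases j <;>
      simp [Matrix.vecMul, dotProduct, Fin.sum_univ_four] <;>
      · field_simp
        ring
end

section
/- Let σ denote the row vector (σ₀₀, σ₀₁, σ₁₀, σ₁₁) with σ₀₀ = q·s₀·(q + (1−q)·s₁)/((p+q)·Ψ), σ₀₁ = p·q·s₁·(1−s₀)/((p+q)·Ψ), σ₁₀ = p·q·s₀·(1−s₁)/((p+q)·Ψ), σ₁₁ = p·s₁·(p + (1−p)·s₀)/((p+q)·Ψ), and let S be the 4×4 matrix indexed by the states {(0,0),(0,1),(1,0),(1,1)} with entries S[(0,0),(0,0)] = 1−p, S[(0,0),(1,0)] = p(1−s₁), S[(0,0),(1,1)] = p·s₁, S[(0,1),(0,0)] = (1−p)·s₀, S[(0,1),(0,1)] = (1−p)(1−s₀), S[(0,1),(1,1)] = p, S[(1,0),(0,0)] = q, S[(1,0),(1,0)] = (1−q)(1−s₁), S[(1,0),(1,1)] = (1−q)·s₁, S[(1,1),(0,0)]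 = q·s₀, S[(1,1),(0,1)] = q(1−s₀), S[(1,1),(1,1)] = 1−q, and all other entries 0 (this is the joint source–reconstruction chain under the semantics-aware policy). Then each entry of σ is nonnegative, the entries of σ sum to 1, and σ·S = σ. -/
/-- The vector `σ = (σ₀₀, σ₀₁, σ₁₀, σ₁₁)` is a stationary distribution of the joint
source–reconstruction DTMC under the semantics-aware policy. -/
theorem semantics_aware_stationary_distribution
    (p q s₀ s₁ Ψ : ℝ)
    (hp : 0 < p) (hp1 : p < 1) (hq : 0 < q) (hq1 : q < 1)
    (hs₀ : 0 ≤ s₀) (hs₀1 : s₀ ≤ 1) (hs₁ : 0 ≤ s₁) (hs₁1 : s₁ ≤ 1)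
    (hΨdef : Ψ = q * s₀ + (1 - q) * s₀ * s₁ + p * s₁ * (1 - s₀)) (hΨ : 0 < Ψ)
    (σ : Fin 4 → ℝ)
    (hσ : σ = ![q * s₀ * (q + (1 - q) * s₁) / ((p + q) * Ψ),
                p * q * s₁ * (1 - s₀) / ((p + q) * Ψ),
                p * q * s₀ * (1 - s₁) / ((p + q) * Ψ),
                p * s₁ * (p + (1 - p) * s₀) / ((p + q) * Ψ)])
    (S : Matrix (Fin 4) (Fin 4) ℝ)
    (hS : S = !![1 - p,            0,                   p * (1 - s₁),       p * s₁;
                 (1 - p) * s₀,     (1 - p) * (1 - s₀),  0,                  p;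
                 q,                0,                   (1 - q) * (1 - s₁), (1 - q) * s₁;
                 q * s₀,           q * (1 - s₀),        0,                  1 - q]) :
    (∀ i, 0 ≤ σ i) ∧ (∑ i, σ i = 1) ∧ Matrix.vecMul σ S = σ := by
  have hpq : 0 < p + q := by linarith
  have hden : 0 < (p + q) * Ψ := mul_pos hpq hΨ
  have hden' : (p + q) * Ψ ≠ 0 := ne_of_gt hden
  subst hσ hS hΨdef
  have h0 : 0 ≤ 1 - s₀ := by linarith
  have h1 : 0 ≤ 1 - s₁ := by linarith
  refine ⟨?_, ?_, ?_⟩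
  · intro i
    fin_cases i <;> simp <;>
      apply div_nonneg _ hden.le <;>
      nlinarith [mul_nonneg hs₀ hs₁, mul_nonneg hq.le hs₀, mul_nonneg hp.le hs₁,
        mul_nonneg (mul_nonneg hq.le hs₀) hs₁, mul_nonneg (mul_nonneg hp.le hs₁) h0,
        mul_nonneg (mul_nonneg hp.le hq.le) (mul_nonneg hs₁ h0),
        mul_nonneg (mul_nonneg hp.le hq.le) (mul_nonneg hs₀ h1),
        mul_nonneg hq.le (mul_nonneg hs₀ (mul_nonneg hq.le hs₁))]
  · simp [Fin.sum_univ_four]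
    rw [← add_div, ← add_div, ← add_div, div_eq_one_iff_eq hden']
    ring
  · funext j
    fin_cases j <;>
    · simp [Matrix.vecMul, dotProduct, Fin.sum_univ_four]
      field_simp
      ring
end

section
/- The consecutive-error probabilities Pr[C_E = i] = p·(1−q)^{i−1}·(1−a₁s₁)^i·π₀₀ + q·(1−p)^{i−1}·(1−a₀s₀)^i·π₁₁ for i ≥ 1 form, together with Pr[C_E = 0] = π₀₀ + π₁₁, a probability distribution; concretely, the series ∑_{i=1}^{∞} [ p·(1−q)^{i−1}·(1−a₁·s₁)^i·π₀₀ + q·(1−p)^{i−1}·(1−a₀·s₀)^i·π₁₁ ] converges and its sum equals π₀₁ + π₁₀ (so that adding π₀₀ + π₁₁ gives total mass 1). -/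
/-- The consecutive-error probabilities `Pr[C_E = i]`, `i ≥ 1`, sum to `π₀₁ + π₁₀`,
so that together with `Pr[C_E = 0] = π₀₀ + π₁₁` they form a probability distribution.
The series over `i ≥ 1` is written via the index shift `i = n + 1`, `n : ℕ`. -/
theorem consecutive_error_distribution
    (p q a₀ a₁ s₀ s₁ Φ π₀₀ π₀₁ π₁₀ π₁₁ : ℝ)
    (hp : 0 < p) (hp1 : p < 1) (hq : 0 < q) (hq1 : q < 1)
    (ha₀ : 0 ≤ a₀) (ha₀1 : a₀ ≤ 1) (ha₁ : 0 ≤ a₁) (ha₁1 : a₁ ≤ 1)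
    (hs₀ : 0 ≤ s₀) (hs₀1 : s₀ ≤ 1) (hs₁ : 0 ≤ s₁) (hs₁1 : s₁ ≤ 1)
    (hΦdef : Φ = p * a₁ * s₁ * (1 - a₀ * s₀) + a₀ * s₀ * (q + (1 - q) * a₁ * s₁))
    (hΦ : 0 < Φ)
    (hπ₀₀ : π₀₀ = q * a₀ * s₀ * (q + (1 - q) * a₁ * s₁) / ((p + q) * Φ))
    (hπ₀₁ : π₀₁ = p * q * a₁ * s₁ * (1 - a₀ * s₀) / ((p + q) * Φ))
    (hπ₁₀ : π₁₀ = p * q * a₀ * s₀ * (1 - a₁ * s₁) / ((p + q) * Φ))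
    (hπ₁₁ : π₁₁ = p * a₁ * s₁ * (p + (1 - p) * a₀ * s₀) / ((p + q) * Φ)) :
    HasSum (fun n : ℕ =>
        p * (1 - q) ^ n * (1 - a₁ * s₁) ^ (n + 1) * π₀₀ +
        q * (1 - p) ^ n * (1 - a₀ * s₀) ^ (n + 1) * π₁₁)
      (π₀₁ + π₁₀) ∧
    (π₀₀ + π₁₁) + (π₀₁ + π₁₀) = 1 := by
  have hx0 : 0 ≤ a₁ * s₁ := mul_nonneg ha₁ hs₁
  have hx1 : a₁ * s₁ ≤ 1 := mul_le_one₀ ha₁1 hs₁ hs₁1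
  have hy0 : 0 ≤ a₀ * s₀ := mul_nonneg ha₀ hs₀
  have hy1 : a₀ * s₀ ≤ 1 := mul_le_one₀ ha₀1 hs₀ hs₀1
  have hr₁0 : 0 ≤ (1 - q) * (1 - a₁ * s₁) :=
    mul_nonneg (by linarith) (by linarith)
  have hr₁1 : (1 - q) * (1 - a₁ * s₁) < 1 := by nlinarith
  have hr₂0 : 0 ≤ (1 - p) * (1 - a₀ * s₀) :=
    mul_nonneg (by linarith) (by linarith)
  have hr₂1 : (1 - p) * (1 - a₀ * s₀) < 1 := by nlinarith
  have hd₁ : 1 - (1 - q) * (1 - a₁ * s₁) > 0 := by linarith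
  have hd₂ : 1 - (1 - p) * (1 - a₀ * s₀) > 0 := by linarith
  have hpq : (p + q) > 0 := by linarith
  have hden : (p + q) * Φ ≠ 0 := by positivity
  have h1 : HasSum (fun n : ℕ => ((1 - q) * (1 - a₁ * s₁)) ^ n *
      (p * (1 - a₁ * s₁) * π₀₀))
      ((1 - (1 - q) * (1 - a₁ * s₁))⁻¹ * (p * (1 - a₁ * s₁) * π₀₀)) :=
    (hasSum_geometric_of_lt_one hr₁0 hr₁1).mul_right _
  have h2 : HasSum (fun n : ℕ => ((1 - p) * (1 - a₀ * s₀)) ^ n *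
      (q * (1 - a₀ * s₀) * π₁₁))
      ((1 - (1 - p) * (1 - a₀ * s₀))⁻¹ * (q * (1 - a₀ * s₀) * π₁₁)) :=
    (hasSum_geometric_of_lt_one hr₂0 hr₂1).mul_right _
  have hsum := h1.add h2
  have heq : ∀ n : ℕ,
      ((1 - q) * (1 - a₁ * s₁)) ^ n * (p * (1 - a₁ * s₁) * π₀₀) +
      ((1 - p) * (1 - a₀ * s₀)) ^ n * (q * (1 - a₀ * s₀) * π₁₁) =
      p * (1 - q) ^ n * (1 - a₁ * s₁) ^ (n + 1) * π₀₀ +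
      q * (1 - p) ^ n * (1 - a₀ * s₀) ^ (n + 1) * π₁₁ := by
    intro n
    rw [mul_pow, mul_pow, pow_succ, pow_succ]
    ring
  rw [funext heq] at hsum
  have hval : (1 - (1 - q) * (1 - a₁ * s₁))⁻¹ * (p * (1 - a₁ * s₁) * π₀₀) +
      (1 - (1 - p) * (1 - a₀ * s₀))⁻¹ * (q * (1 - a₀ * s₀) * π₁₁) = π₀₁ + π₁₀ := by
    rw [hπ₀₀, hπ₀₁, hπ₁₀, hπ₁₁]
    field_simp
    ring
  rw [hval] at hsum
  refine ⟨hsum, ?_⟩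
  rw [hπ₀₀, hπ₀₁, hπ₁₀, hπ₁₁, ← add_div, ← add_div, ← add_div,
    div_eq_one_iff_eq hden, hΦdef]
  ring
end

section
/- For every natural number n, the consecutive error violation probability Pr[C_E > n] = ∑_{x=n+1}^{∞} Pr[C_E = x], where Pr[C_E = x] = p·(1−q)^{x−1}·(1−a₁s₁)^x·π₀₀ + q·(1−p)^{x−1}·(1−a₀s₀)^x·π₁₁, converges and equals p·q·a₀·s₀·((1−q)·(1−a₁·s₁))^{n+1} / ((1−q)·(p+q)·Φ) + p·q·a₁·s₁·((1−p)·(1−a₀·s₀))^{n+1} / ((1−p)·(p+q)·Φ). -/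
/-- The consecutive error violation probability `Pr[C_E > n] = ∑_{x ≥ n+1} Pr[C_E = x]`
converges and has the closed form of eq. (18). The series over `x ≥ n + 1` is written via
the shift `x = n + 1 + k`, `k : ℕ`. -/
theorem consecutive_error_violation_probability
    (p q a₀ a₁ s₀ s₁ Φ π₀₀ π₁₁ : ℝ)
    (hp : 0 < p) (hp1 : p < 1) (hq : 0 < q) (hq1 : q < 1)
    (ha₀ : 0 ≤ a₀) (ha₀1 : a₀ ≤ 1) (ha₁ : 0 ≤ a₁) (ha₁1 : a₁ ≤ 1)
    (hs₀ : 0 ≤ s₀) (hs₀1 : s₀ ≤ 1) (hs₁ : 0 ≤ s₁) (hs₁1 : s₁ ≤ 1)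
    (hΦdef : Φ = p * a₁ * s₁ * (1 - a₀ * s₀) + a₀ * s₀ * (q + (1 - q) * a₁ * s₁))
    (hΦ : 0 < Φ)
    (hπ₀₀ : π₀₀ = q * a₀ * s₀ * (q + (1 - q) * a₁ * s₁) / ((p + q) * Φ))
    (hπ₁₁ : π₁₁ = p * a₁ * s₁ * (p + (1 - p) * a₀ * s₀) / ((p + q) * Φ))
    (n : ℕ) :
    HasSum (fun k : ℕ =>
        p * (1 - q) ^ (n + k) * (1 - a₁ * s₁) ^ (n + k + 1) * π₀₀ +
        q * (1 - p) ^ (n + k) * (1 - a₀ * s₀) ^ (n + k + 1) * π₁₁)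
      (p * q * a₀ * s₀ * ((1 - q) * (1 - a₁ * s₁)) ^ (n + 1) / ((1 - q) * (p + q) * Φ) +
       p * q * a₁ * s₁ * ((1 - p) * (1 - a₀ * s₀)) ^ (n + 1) / ((1 - p) * (p + q) * Φ)) := by
  have h11 : a₁ * s₁ ≤ 1 := mul_le_one₀ ha₁1 hs₁ hs₁1
  have h10 : 0 ≤ a₁ * s₁ := mul_nonneg ha₁ hs₁
  have h01 : a₀ * s₀ ≤ 1 := mul_le_one₀ ha₀1 hs₀ hs₀1
  have h00 : 0 ≤ a₀ * s₀ := mul_nonneg ha₀ hs₀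
  have hr₁0 : 0 ≤ (1 - q) * (1 - a₁ * s₁) := mul_nonneg (by linarith) (by linarith)
  have hr₁1 : (1 - q) * (1 - a₁ * s₁) < 1 := by nlinarith
  have hr₂0 : 0 ≤ (1 - p) * (1 - a₀ * s₀) := mul_nonneg (by linarith) (by linarith)
  have hr₂1 : (1 - p) * (1 - a₀ * s₀) < 1 := by nlinarith
  have h1 := (hasSum_geometric_of_lt_one hr₁0 hr₁1).mul_left
      (p * (1 - q) ^ n * (1 - a₁ * s₁) ^ (n + 1) * π₀₀)
  have h2 := (hasSum_geometric_of_lt_one hr₂0 hr₂1).mul_left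
      (q * (1 - p) ^ n * (1 - a₀ * s₀) ^ (n + 1) * π₁₁)
  have e1 : 1 - (1 - q) * (1 - a₁ * s₁) = q + (1 - q) * (a₁ * s₁) := by ring
  have e2 : 1 - (1 - p) * (1 - a₀ * s₀) = p + (1 - p) * (a₀ * s₀) := by ring
  have d1 : (0:ℝ) < q + (1 - q) * (a₁ * s₁) := by nlinarith
  have d2 : (0:ℝ) < p + (1 - p) * (a₀ * s₀) := by nlinarith
  have hpq : (0:ℝ) < p + q := by linarith
  have hD1 : q + (1 - q) * (a₁ * s₁) ≠ 0 := d1.ne'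
  have hD2 : p + (1 - p) * (a₀ * s₀) ≠ 0 := d2.ne'
  have hpq' : p + q ≠ 0 := hpq.ne'
  have hΦ' : Φ ≠ 0 := hΦ.ne'
  have h1q : (1 : ℝ) - q ≠ 0 := by linarith
  have h1p : (1 : ℝ) - p ≠ 0 := by linarith
  have v1 : p * (1 - q) ^ n * (1 - a₁ * s₁) ^ (n + 1) * π₀₀ *
      (1 - (1 - q) * (1 - a₁ * s₁))⁻¹ =
      p * q * a₀ * s₀ * ((1 - q) * (1 - a₁ * s₁)) ^ (n + 1) / ((1 - q) * (p + q) * Φ) := by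
    rw [hπ₀₀, e1, mul_pow, show q + (1 - q) * a₁ * s₁ = q + (1 - q) * (a₁ * s₁) by ring]
    generalize q + (1 - q) * (a₁ * s₁) = D at hD1 ⊢
    field_simp [hD1]
    ring
  have v2 : q * (1 - p) ^ n * (1 - a₀ * s₀) ^ (n + 1) * π₁₁ *
      (1 - (1 - p) * (1 - a₀ * s₀))⁻¹ =
      p * q * a₁ * s₁ * ((1 - p) * (1 - a₀ * s₀)) ^ (n + 1) / ((1 - p) * (p + q) * Φ) := by
    rw [hπ₁₁, e2, mul_pow, show p + (1 - p) * a₀ * s₀ = p + (1 - p) * (a₀ * s₀) by ring]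
    generalize p + (1 - p) * (a₀ * s₀) = D at hD2 ⊢
    field_simp [hD2]
    ring
  rw [← v1, ← v2]
  refine HasSum.congr_fun (h1.add h2) ?_
  intro k
  rw [mul_pow, mul_pow]
  ring
end

section
/- The importance-aware consecutive-error probabilities form a probability distribution: the series ∑_{i=1}^{∞} p·(1−q)^{i−1}·(1−a₁·s₁)^i·π₀₀ converges and its sum equals π₁₀, so that together with Pr[C_S = 0] = 1 − π₁₀ the total mass is 1. -/
/-- The importance-aware consecutive-error probabilities form a probability distribution:
the series `∑_{i≥1} p (1-q)^{i-1} (1-a₁s₁)^i π₀₀` converges with sum `π₁₀`, so together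
with `Pr[C_S = 0] = 1 - π₁₀` the total mass is 1. The series over `i ≥ 1` is written via
the shift `i = n + 1`. -/
theorem importance_aware_consecutive_error_distribution
    (p q a₀ a₁ s₀ s₁ Φ π₀₀ π₁₀ : ℝ)
    (hp : 0 < p) (hp1 : p < 1) (hq : 0 < q) (hq1 : q < 1)
    (ha₀ : 0 ≤ a₀) (ha₀1 : a₀ ≤ 1) (ha₁ : 0 ≤ a₁) (ha₁1 : a₁ ≤ 1)
    (hs₀ : 0 ≤ s₀) (hs₀1 : s₀ ≤ 1) (hs₁ : 0 ≤ s₁) (hs₁1 : s₁ ≤ 1)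
    (hΦdef : Φ = p * a₁ * s₁ * (1 - a₀ * s₀) + a₀ * s₀ * (q + (1 - q) * a₁ * s₁))
    (hΦ : 0 < Φ)
    (hπ₀₀ : π₀₀ = q * a₀ * s₀ * (q + (1 - q) * a₁ * s₁) / ((p + q) * Φ))
    (hπ₁₀ : π₁₀ = p * q * a₀ * s₀ * (1 - a₁ * s₁) / ((p + q) * Φ)) :
    HasSum (fun n : ℕ => p * (1 - q) ^ n * (1 - a₁ * s₁) ^ (n + 1) * π₀₀) π₁₀ ∧
    (1 - π₁₀) + π₁₀ = 1 := by
  have hx : 0 ≤ a₁ * s₁ := mul_nonneg ha₁ hs₁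
  have hx1 : a₁ * s₁ ≤ 1 := by nlinarith
  have hr0 : 0 ≤ (1 - q) * (1 - a₁ * s₁) := by nlinarith
  have hr1 : (1 - q) * (1 - a₁ * s₁) < 1 := by nlinarith
  have hden : 0 < 1 - (1 - q) * (1 - a₁ * s₁) := by linarith
  have hpq : (0:ℝ) < p + q := by linarith
  constructor
  · have h := (hasSum_geometric_of_lt_one hr0 hr1).mul_left (p * (1 - a₁ * s₁) * π₀₀)
    convert h using 1
    · rfl
    · funext n
      rw [mul_pow]
      ring
    · rw [hπ₁₀, hπ₀₀]
      rw [eq_comm, mul_comm, inv_mul_eq_div, div_eq_iff (ne_of_gt hden)]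
      field_simp
      ring
  · ring
end

section
/- Define T₁ = (p·C₁₀ + C₁₀·s₀ − p·C₁₀·s₀ − q·C₀₁·(1−s₀)) / (C₁₀·(1−p)·s₀ + p·C₁₀·s₁ + C₀₁·(1−q)·s₁ + q·C₀₁·s₀) and, for a₁ ∈ [0,1], T₂(a₁) = a₁·(C₀₁·(q + (1−q)·s₁) − p·C₁₀·(1−s₁)) / (a₁·(C₁₀·s₀·(1−p) + p·C₁₀·s₁ + C₀₁·s₁·(1−q) + q·C₀₁·s₀) − p·C₁₀ − C₁₀·s₀ + p·C₁₀·s₀ + q·C₀₁·(1−s₀)), assuming the denominator of T₂(a₁) is positive. If max{0, T₁} ≤ a₁ ≤ 1 and max{0, T₂(a₁)} ≤ a₀ ≤ 1, then the state-aware randomized stationary policy has average cost of actuation error no larger than the semantics-aware policy: p·q·(C₀₁·a₁·s₁·(1−a₀·s₀) + C₁₀·a₀·s₀·(1−a₁·s₁)) / ((p+q)·Φ(a₀,a₁)) ≤ p·q·(C₀₁·s₁·(1−s₀) + C₁₀·s₀·(1−s₁)) / ((p+q)·(q·s₀ + (1−q)·s₀·s₁ + p·s₁·(1−s₀))). -/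
/-- Remark 1: when `max{0,T₁} ≤ a₁ ≤ 1` and `max{0,T₂(a₁)} ≤ a₀ ≤ 1` (with the
denominator of `T₂(a₁)` positive), the state-aware randomized stationary policy has
average cost of actuation error no larger than that of the semantics-aware policy. -/
theorem state_aware_beats_semantics_aware
    (p q s₀ s₁ C₀₁ C₁₀ a₀ a₁ T₁ T₂ : ℝ)
    (hp : 0 < p) (hp1 : p < 1) (hq : 0 < q) (hq1 : q < 1)
    (hs₀ : 0 < s₀) (hs₀1 : s₀ ≤ 1) (hs₁ : 0 < s₁) (hs₁1 : s₁ ≤ 1)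
    (hC₀₁ : 0 < C₀₁) (hC₁₀ : 0 < C₁₀)
    (ha₀ : 0 ≤ a₀) (ha₀1 : a₀ ≤ 1) (ha₁ : 0 ≤ a₁) (ha₁1 : a₁ ≤ 1)
    (hΦ : 0 < p * a₁ * s₁ * (1 - a₀ * s₀) + a₀ * s₀ * (q + (1 - q) * a₁ * s₁))
    (hT₁ : T₁ = (p * C₁₀ + C₁₀ * s₀ - p * C₁₀ * s₀ - q * C₀₁ * (1 - s₀)) /
      (C₁₀ * (1 - p) * s₀ + p * C₁₀ * s₁ + C₀₁ * (1 - q) * s₁ + q * C₀₁ * s₀))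
    (hT₂den : 0 < a₁ * (C₁₀ * s₀ * (1 - p) + p * C₁₀ * s₁ + C₀₁ * s₁ * (1 - q) + q * C₀₁ * s₀)
      - p * C₁₀ - C₁₀ * s₀ + p * C₁₀ * s₀ + q * C₀₁ * (1 - s₀))
    (hT₂ : T₂ = a₁ * (C₀₁ * (q + (1 - q) * s₁) - p * C₁₀ * (1 - s₁)) /
      (a₁ * (C₁₀ * s₀ * (1 - p) + p * C₁₀ * s₁ + C₀₁ * s₁ * (1 - q) + q * C₀₁ * s₀)
        - p * C₁₀ - C₁₀ * s₀ + p * C₁₀ * s₀ + q * C₀₁ * (1 - s₀)))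
    (ha₁T : max 0 T₁ ≤ a₁) (ha₀T : max 0 T₂ ≤ a₀) :
    p * q * (C₀₁ * (a₁ * s₁) * (1 - a₀ * s₀) + C₁₀ * (a₀ * s₀) * (1 - a₁ * s₁)) /
      ((p + q) * (p * a₁ * s₁ * (1 - a₀ * s₀) + a₀ * s₀ * (q + (1 - q) * a₁ * s₁)))
    ≤ p * q * (C₀₁ * s₁ * (1 - s₀) + C₁₀ * s₀ * (1 - s₁)) /
      ((p + q) * (q * s₀ + (1 - q) * s₀ * s₁ + p * s₁ * (1 - s₀))) := by
  have h2 : T₂ ≤ a₀ := le_trans (le_max_right _ _) ha₀T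
  rw [hT₂] at h2
  have hkey : a₁ * (C₀₁ * (q + (1 - q) * s₁) - p * C₁₀ * (1 - s₁)) ≤
      a₀ * (a₁ * (C₁₀ * s₀ * (1 - p) + p * C₁₀ * s₁ + C₀₁ * s₁ * (1 - q) + q * C₀₁ * s₀)
        - p * C₁₀ - C₁₀ * s₀ + p * C₁₀ * s₀ + q * C₀₁ * (1 - s₀)) :=
    (div_le_iff₀ hT₂den).mp h2
  have hD11 : 0 < q * s₀ + (1 - q) * s₀ * s₁ + p * s₁ * (1 - s₀) := by
    nlinarith [mul_pos hq hs₀, mul_pos hp hs₁, mul_pos hs₀ hs₁]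
  have hpq : 0 < p + q := by linarith
  rw [div_le_div_iff₀ (by positivity) (by positivity)]
  nlinarith [mul_nonneg (mul_nonneg (mul_nonneg (mul_nonneg (le_of_lt hp) (le_of_lt hq))
      (le_of_lt hpq)) (mul_nonneg (le_of_lt hs₀) (le_of_lt hs₁))) (sub_nonneg.mpr hkey)]
end

section
/- Assume a₁·s₁ > 0, a₀·s₀ < 1, 1 − a₀·s₀·(1 + q·(1−q)) > 0, and a₁ ≥ q²·a₀·s₀ / (s₁·(1 − a₀·s₀·(1 + q·(1−q)))). Then the time-averaged reconstruction error P_E(p) = p·q·(a₁·s₁ + a₀·s₀·(1 − 2·a₁·s₁)) / ((p+q)·(p·a₁·s₁·(1−a₀·s₀) + a₀·s₀·(q + (1−q)·a₁·s₁))), viewed as a function of p, is strictly decreasing on the interval (√(q·a₀·s₀·(q + (1−q)·a₁·s₁) / (a₁·s₁·(1−a₀·s₀))), 1]; that is, for any p₁ < p₂ in that interval (with p₁, p₂ ∈ (0,1]), P_E(p₂) < P_E(p₁). -/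
/-- Remark 2 (first part): under the stated conditions on `a₁`, the time-averaged
reconstruction error `P_E(p)` is strictly decreasing in `p` on the interval
`(√(q·a₀·s₀·(q+(1-q)·a₁·s₁)/(a₁·s₁·(1-a₀·s₀))), 1]`. -/
theorem reconstruction_error_decreasing_in_p
    (q a₀ a₁ s₀ s₁ : ℝ)
    (hq : 0 < q) (hq1 : q < 1)
    (ha₀ : 0 ≤ a₀) (ha₀1 : a₀ ≤ 1) (ha₁ : 0 ≤ a₁) (ha₁1 : a₁ ≤ 1)
    (hs₀ : 0 ≤ s₀) (hs₀1 : s₀ ≤ 1) (hs₁ : 0 ≤ s₁) (hs₁1 : s₁ ≤ 1)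
    (ha₁s₁ : 0 < a₁ * s₁) (ha₀s₀ : a₀ * s₀ < 1)
    (hden : 0 < 1 - a₀ * s₀ * (1 + q * (1 - q)))
    (ha₁lb : a₁ ≥ q ^ 2 * a₀ * s₀ / (s₁ * (1 - a₀ * s₀ * (1 + q * (1 - q)))))
    (P : ℝ → ℝ)
    (hP : ∀ p : ℝ, P p = p * q * (a₁ * s₁ + a₀ * s₀ * (1 - 2 * (a₁ * s₁))) /
      ((p + q) * (p * a₁ * s₁ * (1 - a₀ * s₀) + a₀ * s₀ * (q + (1 - q) * a₁ * s₁))))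
    (p₁ p₂ : ℝ) (hp₁ : 0 < p₁) (hp₁1 : p₁ ≤ 1) (hp₂ : 0 < p₂) (hp₂1 : p₂ ≤ 1)
    (hlb₁ : Real.sqrt (q * a₀ * s₀ * (q + (1 - q) * a₁ * s₁) /
      (a₁ * s₁ * (1 - a₀ * s₀))) < p₁)
    (hlb₂ : Real.sqrt (q * a₀ * s₀ * (q + (1 - q) * a₁ * s₁) /
      (a₁ * s₁ * (1 - a₀ * s₀))) < p₂)
    (h₁₂ : p₁ < p₂) :
    P p₂ < P p₁ := by
  have hA : 0 < a₁ * s₁ := ha₁s₁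
  have hB0 : 0 ≤ a₀ * s₀ := mul_nonneg ha₀ hs₀
  have hα : 0 < a₁ * s₁ * (1 - a₀ * s₀) := mul_pos hA (by linarith)
  have hβ : 0 ≤ a₀ * s₀ * (q + (1 - q) * a₁ * s₁) :=
    mul_nonneg hB0 (by nlinarith)
  have hA1 : a₁ * s₁ ≤ 1 := mul_le_one₀ ha₁1 hs₁ hs₁1
  have hC : 0 < q * (a₁ * s₁ + a₀ * s₀ * (1 - 2 * (a₁ * s₁))) := by
    have h1 : 0 ≤ a₀ * s₀ * (1 - a₁ * s₁) := mul_nonneg hB0 (by linarith)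
    nlinarith [hα]
  set x := q * a₀ * s₀ * (q + (1 - q) * a₁ * s₁) / (a₁ * s₁ * (1 - a₀ * s₀)) with hx
  have hx0 : 0 ≤ x := div_nonneg (by nlinarith) hα.le
  have hkey : x < p₁ * p₂ := by
    have := Real.sq_sqrt hx0
    nlinarith [Real.sqrt_nonneg x, mul_lt_mul'' hlb₁ hlb₂ (Real.sqrt_nonneg x) (Real.sqrt_nonneg x)]
  have hkey' : q * (a₀ * s₀ * (q + (1 - q) * a₁ * s₁)) < a₁ * s₁ * (1 - a₀ * s₀) * (p₁ * p₂) := by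
    rw [div_lt_iff₀ hα] at hkey
    nlinarith [hkey]
  have hD₁ : 0 < (p₁ + q) * (p₁ * a₁ * s₁ * (1 - a₀ * s₀) + a₀ * s₀ * (q + (1 - q) * a₁ * s₁)) := by
    apply mul_pos (by linarith)
    linarith [mul_pos hp₁ hα, hβ]
  have hD₂ : 0 < (p₂ + q) * (p₂ * a₁ * s₁ * (1 - a₀ * s₀) + a₀ * s₀ * (q + (1 - q) * a₁ * s₁)) := by
    apply mul_pos (by linarith)
    linarith [mul_pos hp₂ hα, hβ]
  rw [hP, hP, div_lt_div_iff₀ hD₂ hD₁]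
  have hid : p₁ * q * (a₁ * s₁ + a₀ * s₀ * (1 - 2 * (a₁ * s₁))) *
      ((p₂ + q) * (p₂ * a₁ * s₁ * (1 - a₀ * s₀) + a₀ * s₀ * (q + (1 - q) * a₁ * s₁))) -
      p₂ * q * (a₁ * s₁ + a₀ * s₀ * (1 - 2 * (a₁ * s₁))) *
      ((p₁ + q) * (p₁ * a₁ * s₁ * (1 - a₀ * s₀) + a₀ * s₀ * (q + (1 - q) * a₁ * s₁))) =
      q * (a₁ * s₁ + a₀ * s₀ * (1 - 2 * (a₁ * s₁))) * ((p₂ - p₁) *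
      (a₁ * s₁ * (1 - a₀ * s₀) * (p₁ * p₂) - q * (a₀ * s₀ * (q + (1 - q) * a₁ * s₁)))) := by
    ring
  linarith [mul_pos hC (mul_pos (sub_pos.2 h₁₂) (sub_pos.2 hkey')), hid]
end

section
/- Assume a₀·s₀ > 0, a₁·s₁ < 1, 1 − a₁·s₁·(1 + p·(1−p)) > 0, and a₀ ≥ p²·a₁·s₁ / (s₀·(1 − a₁·s₁·(1 + p·(1−p)))). Then the time-averaged reconstruction error P_E(q) = p·q·(a₁·s₁ + a₀·s₀·(1 − 2·a₁·s₁)) / ((p+q)·(p·a₁·s₁·(1−a₀·s₀) + a₀·s₀·(q + (1−q)·a₁·s₁))), viewed as a function of q, is strictly decreasing on the interval (√((p·a₀·s₀·a₁·s₁ + p²·a₁·s₁·(1−a₀·s₀)) / (a₀·s₀·(1−a₁·s₁))), 1]; that is, for any q₁ < q₂ in that interval (with q₁, q₂ ∈ (0,1]), P_E(q₂) < P_E(q₁). -/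
/-- Remark 2 (second part): under the stated conditions on `a₀`, the time-averaged
reconstruction error `P_E(q)` is strictly decreasing in `q` on the interval
`(√((p·a₀·s₀·a₁·s₁ + p²·a₁·s₁·(1-a₀·s₀))/(a₀·s₀·(1-a₁·s₁))), 1]`. -/
theorem reconstruction_error_decreasing_in_q
    (p a₀ a₁ s₀ s₁ : ℝ)
    (hp : 0 < p) (hp1 : p < 1)
    (ha₀ : 0 ≤ a₀) (ha₀1 : a₀ ≤ 1) (ha₁ : 0 ≤ a₁) (ha₁1 : a₁ ≤ 1)
    (hs₀ : 0 ≤ s₀) (hs₀1 : s₀ ≤ 1) (hs₁ : 0 ≤ s₁) (hs₁1 : s₁ ≤ 1)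
    (ha₀s₀ : 0 < a₀ * s₀) (ha₁s₁ : a₁ * s₁ < 1)
    (hden : 0 < 1 - a₁ * s₁ * (1 + p * (1 - p)))
    (ha₀lb : a₀ ≥ p ^ 2 * a₁ * s₁ / (s₀ * (1 - a₁ * s₁ * (1 + p * (1 - p)))))
    (P : ℝ → ℝ)
    (hP : ∀ q : ℝ, P q = p * q * (a₁ * s₁ + a₀ * s₀ * (1 - 2 * (a₁ * s₁))) /
      ((p + q) * (p * a₁ * s₁ * (1 - a₀ * s₀) + a₀ * s₀ * (q + (1 - q) * a₁ * s₁))))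
    (q₁ q₂ : ℝ) (hq₁ : 0 < q₁) (hq₁1 : q₁ ≤ 1) (hq₂ : 0 < q₂) (hq₂1 : q₂ ≤ 1)
    (hlb₁ : Real.sqrt ((p * a₀ * s₀ * (a₁ * s₁) + p ^ 2 * a₁ * s₁ * (1 - a₀ * s₀)) /
      (a₀ * s₀ * (1 - a₁ * s₁))) < q₁)
    (hlb₂ : Real.sqrt ((p * a₀ * s₀ * (a₁ * s₁) + p ^ 2 * a₁ * s₁ * (1 - a₀ * s₀)) /
      (a₀ * s₀ * (1 - a₁ * s₁))) < q₂)
    (h₁₂ : q₁ < q₂) :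
    P q₂ < P q₁ := by
  have hA0 : 0 ≤ a₁ * s₁ := mul_nonneg ha₁ hs₁
  have hB0 : 0 < a₀ * s₀ := ha₀s₀
  have hBle : a₀ * s₀ ≤ 1 := mul_le_one₀ ha₀1 hs₀ hs₀1
  set X : ℝ := (p * a₀ * s₀ * (a₁ * s₁) + p ^ 2 * a₁ * s₁ * (1 - a₀ * s₀)) /
      (a₀ * s₀ * (1 - a₁ * s₁)) with hXdef
  have hXden : 0 < a₀ * s₀ * (1 - a₁ * s₁) := mul_pos hB0 (by linarith)
  have hXnum : 0 ≤ p * a₀ * s₀ * (a₁ * s₁) + p ^ 2 * a₁ * s₁ * (1 - a₀ * s₀) := by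
    have h1 : 0 ≤ p * a₀ * s₀ * (a₁ * s₁) := by positivity
    have h2 : 0 ≤ p ^ 2 * a₁ * s₁ * (1 - a₀ * s₀) :=
      mul_nonneg (mul_nonneg (mul_nonneg (sq_nonneg p) ha₁) hs₁) (by linarith)
    linarith
  have hX0 : 0 ≤ X := div_nonneg hXnum hXden.le
  have hss : Real.sqrt X * Real.sqrt X = X := Real.mul_self_sqrt hX0
  have hXlt : X < q₁ * q₂ := by
    nlinarith [Real.sqrt_nonneg X]
  have hkey : p * a₀ * s₀ * (a₁ * s₁) + p ^ 2 * a₁ * s₁ * (1 - a₀ * s₀) <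
      q₁ * q₂ * (a₀ * s₀ * (1 - a₁ * s₁)) := by
    have := (div_lt_iff₀ hXden).mp hXlt
    linarith
  -- positivity of denominators
  have hd₁ : 0 < (p + q₁) * (p * a₁ * s₁ * (1 - a₀ * s₀) + a₀ * s₀ * (q₁ + (1 - q₁) * a₁ * s₁)) := by
    have h1 : 0 ≤ p * a₁ * s₁ * (1 - a₀ * s₀) :=
      mul_nonneg (mul_nonneg (mul_nonneg hp.le ha₁) hs₁) (by linarith)
    have h2 : 0 < a₀ * s₀ * (q₁ + (1 - q₁) * a₁ * s₁) :=
      mul_pos hB0 (by nlinarith [mul_nonneg (show (0:ℝ) ≤ 1 - q₁ by linarith) hA0])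
    exact mul_pos (by linarith) (by linarith)
  have hd₂ : 0 < (p + q₂) * (p * a₁ * s₁ * (1 - a₀ * s₀) + a₀ * s₀ * (q₂ + (1 - q₂) * a₁ * s₁)) := by
    have h1 : 0 ≤ p * a₁ * s₁ * (1 - a₀ * s₀) :=
      mul_nonneg (mul_nonneg (mul_nonneg hp.le ha₁) hs₁) (by linarith)
    have h2 : 0 < a₀ * s₀ * (q₂ + (1 - q₂) * a₁ * s₁) :=
      mul_pos hB0 (by nlinarith [mul_nonneg (show (0:ℝ) ≤ 1 - q₂ by linarith) hA0])
    exact mul_pos (by linarith) (by linarith)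
  have hN : 0 < p * (a₁ * s₁ + a₀ * s₀ * (1 - 2 * (a₁ * s₁))) := by
    have h1 : 0 ≤ a₁ * s₁ * (1 - a₀ * s₀) := mul_nonneg hA0 (by linarith)
    exact mul_pos hp (by linarith [h1, hXden])
  rw [hP q₁, hP q₂]
  rw [div_lt_div_iff₀ hd₂ hd₁]
  have hpos := mul_pos (mul_pos hN (sub_pos.mpr h₁₂)) (sub_pos.mpr hkey)
  linarith [hpos, sq_nonneg p]
end

section
/- Assume a₁·s₁ > 0 and a₁·s₁·(p·C₁₀ + (1−q)·C₀₁) ≥ p·C₁₀ − q·C₀₁. Then the average cost of actuation error P^C_E(a₀) = p·q·(C₀₁·a₁·s₁·(1 − a₀·s₀) + C₁₀·a₀·s₀·(1 − a₁·s₁)) / ((p+q)·(p·a₁·s₁·(1−a₀·s₀) + a₀·s₀·(q + (1−q)·a₁·s₁))), viewed as a function of the sampling probability a₀, is nonincreasing on [0,1]: for all 0 ≤ x ≤ y ≤ 1, P^C_E(y) ≤ P^C_E(x). -/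
lemma pos_comb {c q t : ℝ} (hc : 0 < c) (hq : 0 < q) (ht : 0 ≤ t) (ht1 : t ≤ 1) :
    0 < c * (1 - t) + t * q := by
  rcases le_total c q with h | h
  · nlinarith
  · nlinarith

/-- Condition (28): when `a₁·s₁·(p·C₁₀ + (1−q)·C₀₁) ≥ p·C₁₀ − q·C₀₁` (and `a₁·s₁ > 0`),
the average cost of actuation error is nonincreasing in the sampling probability `a₀`. -/
theorem cost_actuation_error_nonincreasing_in_a0
    (p q a₁ s₀ s₁ C₀₁ C₁₀ : ℝ)
    (hp : 0 < p) (hp1 : p < 1) (hq : 0 < q) (hq1 : q < 1)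
    (ha₁ : 0 ≤ a₁) (ha₁1 : a₁ ≤ 1)
    (hs₀ : 0 ≤ s₀) (hs₀1 : s₀ ≤ 1) (hs₁ : 0 ≤ s₁) (hs₁1 : s₁ ≤ 1)
    (hC₀₁ : 0 < C₀₁) (hC₁₀ : 0 < C₁₀)
    (ha₁s₁ : 0 < a₁ * s₁)
    (hcond : a₁ * s₁ * (p * C₁₀ + (1 - q) * C₀₁) ≥ p * C₁₀ - q * C₀₁)
    (P : ℝ → ℝ)
    (hP : ∀ a₀ : ℝ, P a₀ =
      p * q * (C₀₁ * (a₁ * s₁) * (1 - a₀ * s₀) + C₁₀ * (a₀ * s₀) * (1 - a₁ * s₁)) /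
      ((p + q) * (p * a₁ * s₁ * (1 - a₀ * s₀) + a₀ * s₀ * (q + (1 - q) * a₁ * s₁)))) :
    ∀ x y : ℝ, 0 ≤ x → x ≤ y → y ≤ 1 → P y ≤ P x := by
  intro x y hx hxy hy
  rw [hP x, hP y]
  have hpb : 0 < p * (a₁ * s₁) := mul_pos hp ha₁s₁
  have hu : 0 ≤ x * s₀ := mul_nonneg hx hs₀
  have hu1 : x * s₀ ≤ 1 := by nlinarith
  have hv : 0 ≤ y * s₀ := mul_nonneg (hx.trans hxy) hs₀
  have hv1 : y * s₀ ≤ 1 := by nlinarith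
  have hq1b : (0:ℝ) ≤ 1 - q := by linarith
  have hDx : 0 < (p + q) * (p * a₁ * s₁ * (1 - x * s₀) + x * s₀ * (q + (1 - q) * a₁ * s₁)) := by
    have h1 := pos_comb hpb hq hu hu1
    have h2 : 0 ≤ x * s₀ * ((1 - q) * (a₁ * s₁)) :=
      mul_nonneg hu (mul_nonneg hq1b ha₁s₁.le)
    nlinarith
  have hDy : 0 < (p + q) * (p * a₁ * s₁ * (1 - y * s₀) + y * s₀ * (q + (1 - q) * a₁ * s₁)) := by
    have h1 := pos_comb hpb hq hv hv1
    have h2 : 0 ≤ y * s₀ * ((1 - q) * (a₁ * s₁)) :=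
      mul_nonneg hv (mul_nonneg hq1b ha₁s₁.le)
    nlinarith
  rw [div_le_div_iff₀ hDy hDx]
  have hdiff : 0 ≤ y * s₀ - x * s₀ := by nlinarith
  have hkey : 0 ≤ a₁ * s₁ * (a₁ * s₁ * (p * C₁₀ + (1 - q) * C₀₁) - (p * C₁₀ - q * C₀₁)) :=
    mul_nonneg ha₁s₁.le (by linarith)
  have hmain : 0 ≤ (p * q * (p + q)) * ((y * s₀ - x * s₀) *
      (a₁ * s₁ * (a₁ * s₁ * (p * C₁₀ + (1 - q) * C₀₁) - (p * C₁₀ - q * C₀₁)))) :=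
    mul_nonneg (by positivity) (mul_nonneg hdiff hkey)
  nlinarith [hmain]
end

section
/- Assume a₀·s₀ > 0 and a₀·s₀·(q·C₀₁ + (1−p)·C₁₀) ≥ q·C₀₁ − p·C₁₀. Then the average cost of actuation error P^C_E(a₁) = p·q·(C₀₁·a₁·s₁·(1 − a₀·s₀) + C₁₀·a₀·s₀·(1 − a₁·s₁)) / ((p+q)·(p·a₁·s₁·(1−a₀·s₀) + a₀·s₀·(q + (1−q)·a₁·s₁))), viewed as a function of the sampling probability a₁, is nonincreasing on [0,1]: for all 0 ≤ x ≤ y ≤ 1, P^C_E(y) ≤ P^C_E(x). -/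
/-- Condition (29): when `a₀·s₀·(q·C₀₁ + (1−p)·C₁₀) ≥ q·C₀₁ − p·C₁₀` (and `a₀·s₀ > 0`),
the average cost of actuation error is nonincreasing in the sampling probability `a₁`. -/
theorem cost_actuation_error_nonincreasing_in_a1
    (p q a₀ s₀ s₁ C₀₁ C₁₀ : ℝ)
    (hp : 0 < p) (hp1 : p < 1) (hq : 0 < q) (hq1 : q < 1)
    (ha₀ : 0 ≤ a₀) (ha₀1 : a₀ ≤ 1)
    (hs₀ : 0 ≤ s₀) (hs₀1 : s₀ ≤ 1) (hs₁ : 0 ≤ s₁) (hs₁1 : s₁ ≤ 1)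
    (hC₀₁ : 0 < C₀₁) (hC₁₀ : 0 < C₁₀)
    (ha₀s₀ : 0 < a₀ * s₀)
    (hcond : a₀ * s₀ * (q * C₀₁ + (1 - p) * C₁₀) ≥ q * C₀₁ - p * C₁₀)
    (P : ℝ → ℝ)
    (hP : ∀ a₁ : ℝ, P a₁ =
      p * q * (C₀₁ * (a₁ * s₁) * (1 - a₀ * s₀) + C₁₀ * (a₀ * s₀) * (1 - a₁ * s₁)) /
      ((p + q) * (p * a₁ * s₁ * (1 - a₀ * s₀) + a₀ * s₀ * (q + (1 - q) * a₁ * s₁)))) :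
    ∀ x y : ℝ, 0 ≤ x → x ≤ y → y ≤ 1 → P y ≤ P x := by
  intro x y hx hxy hy1
  have hb1 : a₀ * s₀ ≤ 1 := by nlinarith
  have hy0 : (0:ℝ) ≤ y := le_trans hx hxy
  have hDx : 0 < (p + q) * (p * x * s₁ * (1 - a₀ * s₀) + a₀ * s₀ * (q + (1 - q) * x * s₁)) := by
    nlinarith [mul_pos ha₀s₀ hq, mul_nonneg (mul_nonneg (mul_nonneg hp.le hx) hs₁) (by linarith : (0:ℝ) ≤ 1 - a₀*s₀), mul_nonneg ha₀s₀.le (mul_nonneg (mul_nonneg (by linarith : (0:ℝ) ≤ 1-q) hx) hs₁)]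
  have hDy : 0 < (p + q) * (p * y * s₁ * (1 - a₀ * s₀) + a₀ * s₀ * (q + (1 - q) * y * s₁)) := by
    nlinarith [mul_pos ha₀s₀ hq, mul_nonneg (mul_nonneg (mul_nonneg hp.le hy0) hs₁) (by linarith : (0:ℝ) ≤ 1 - a₀*s₀), mul_nonneg ha₀s₀.le (mul_nonneg (mul_nonneg (by linarith : (0:ℝ) ≤ 1-q) hy0) hs₁)]
  rw [hP x, hP y]
  rw [div_le_div_iff₀ hDy hDx]
  have hkey : 0 ≤ a₀ * s₀ * C₁₀ - (1 - a₀ * s₀) * (q * C₀₁ - p * C₁₀) := by nlinarith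
  have hd : 0 ≤ (y - x) * s₁ := by
    apply mul_nonneg _ hs₁; linarith
  nlinarith [mul_nonneg (mul_nonneg (mul_nonneg (mul_nonneg
      (mul_nonneg (le_of_lt hp) (le_of_lt hq)) (by linarith : (0:ℝ) ≤ p + q))
      hd) (le_of_lt ha₀s₀)) hkey]
end

section
/- Assume p·C₁₀ ≥ q·C₀₁ and s₁ < (p·C₁₀ − q·C₀₁) / (p·C₁₀ + (1−q)·C₀₁). Let a₁* = min{1, η·(p+q)/p}. Then (a₀, a₁) = (0, a₁*) is an optimal solution of the constrained problem: it is feasible (q·0 + p·a₁* ≤ η·(p+q)), and for every (a₀, a₁) ∈ [0,1]² with q·a₀ + p·a₁ ≤ η·(p+q) and Φ(a₀,a₁) > 0, one has P^C_E(0, a₁*) ≤ P^C_E(a₀, a₁). -/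
/-- Remark 3: when `p·C₁₀ ≥ q·C₀₁` and `s₁ < (p·C₁₀ − q·C₀₁)/(p·C₁₀ + (1−q)·C₀₁)`,
the pair `(a₀, a₁) = (0, min{1, η(p+q)/p})` is an optimal solution of the constrained
minimization of the average cost of actuation error under the sampling-cost budget. -/
theorem optimal_sampling_probabilities_remark3
    (p q s₀ s₁ C₀₁ C₁₀ η a₁star : ℝ)
    (hp : 0 < p) (hp1 : p < 1) (hq : 0 < q) (hq1 : q < 1)
    (hs₀ : 0 ≤ s₀) (hs₀1 : s₀ ≤ 1) (hs₁ : 0 < s₁) (hs₁1 : s₁ ≤ 1)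
    (hC₀₁ : 0 < C₀₁) (hC₁₀ : 0 < C₁₀) (hη : 0 < η)
    (hcost : p * C₁₀ ≥ q * C₀₁)
    (hs₁small : s₁ < (p * C₁₀ - q * C₀₁) / (p * C₁₀ + (1 - q) * C₀₁))
    (ha₁star : a₁star = min 1 (η * (p + q) / p))
    (PCE : ℝ → ℝ → ℝ)
    (hPCE : ∀ a₀ a₁ : ℝ, PCE a₀ a₁ =
      p * q * (C₀₁ * (a₁ * s₁) * (1 - a₀ * s₀) + C₁₀ * (a₀ * s₀) * (1 - a₁ * s₁)) /
      ((p + q) * (p * a₁ * s₁ * (1 - a₀ * s₀) + a₀ * s₀ * (q + (1 - q) * a₁ * s₁)))) :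
    (q * 0 + p * a₁star ≤ η * (p + q)) ∧
    (∀ a₀ a₁ : ℝ, 0 ≤ a₀ → a₀ ≤ 1 → 0 ≤ a₁ → a₁ ≤ 1 →
      q * a₀ + p * a₁ ≤ η * (p + q) →
      0 < p * a₁ * s₁ * (1 - a₀ * s₀) + a₀ * s₀ * (q + (1 - q) * a₁ * s₁) →
      PCE 0 a₁star ≤ PCE a₀ a₁) := by
  have hpq : 0 < p + q := by linarith
  have hstar_pos : 0 < a₁star := by
    rw [ha₁star]
    exact lt_min one_pos (by positivity)
  have hD : 0 < p * C₁₀ + (1 - q) * C₀₁ := by nlinarith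
  have hkey : s₁ * (p * C₁₀ + (1 - q) * C₀₁) < p * C₁₀ - q * C₀₁ :=
    (lt_div_iff₀ hD).mp hs₁small
  constructor
  · have h : a₁star ≤ η * (p + q) / p := by rw [ha₁star]; exact min_le_right _ _
    have := (le_div_iff₀ hp).mp h
    linarith
  · intro a₀ a₁ ha₀ ha₀1 ha₁ ha₁1 hfeas hΦ
    have hL : PCE 0 a₁star = q * C₀₁ / (p + q) := by
      rw [hPCE]
      have h1 : a₁star * s₁ ≠ 0 := by positivity
      field_simp
      ring
    rw [hL, hPCE]
    rw [div_le_div_iff₀ hpq (by positivity)]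
    have hx : a₁ * s₁ ≤ s₁ := by nlinarith
    have hy : 0 ≤ a₀ * s₀ := by positivity
    have key2 : C₀₁ * (q + (1 - q) * (a₁ * s₁)) ≤ p * C₁₀ * (1 - a₁ * s₁) := by nlinarith
    nlinarith [mul_le_mul_of_nonneg_left key2 hy, mul_pos hq hpq,
      mul_le_mul_of_nonneg_left (mul_le_mul_of_nonneg_left key2 hy) (le_of_lt (mul_pos hq hpq))]
end
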